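/- arXiv:1809.08046 — 2 statements merged into one kernel-verified Lean document; each statement's English description precedes it below -/
import Mathlib

section
/- Let L > 0 and let a, b ∈ [0,1]. Then there exists a constant C ≥ 0, depending only on a, b and L, such that for every continuously differentiable function ρ : [0,L] → (0,1), defining the entropy variable u(x) = log ρ(x) − log(1−ρ(x)) − x, one has ∫₀^L ρ(x)(1−ρ(x))·u'(x)² dx − a(1−ρ(0))·u(0) + b·ρ(L)·u(L) ≥ ∫₀^L ρ'(x)² dx − C. -/
/-!
Write `m = ρ(1-ρ)` and `u = log ρ - log(1-ρ) - x`, so that `u' = ρ'/m - 1` and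
`m u'² = ρ'²/m - 2ρ' + m ≥ ρ'² - 2ρ'` because `0 < m ≤ 1`. Integrating, the dissipation
dominates `∫ ρ'² - 2(ρ(L) - ρ(0)) ≥ ∫ ρ'² - 2`. The boundary terms are bounded below
uniformly in `ρ(0), ρ(L) ∈ (0,1)` by `t log t ≥ t - 1`: the only singular parts,
`-(1-ρ) log ρ` and `-ρ log(1-ρ)`, are nonnegative.
-/

open Set Real

lemma one_sub_mul_log_sub_log_one_sub_le {r : ℝ} (hr : r ∈ Ioo 0 1) :
    (1 - r) * (log r - log (1 - r)) ≤ 1 := by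
  obtain ⟨hr0, hr1⟩ := hr
  have hlog : (1 - r) * log r ≤ 0 :=
    mul_nonpos_of_nonneg_of_nonpos (by linarith) (log_nonpos hr0.le hr1.le)
  have hentropy := self_sub_one_le_mul_log (x := 1 - r) (by linarith)
  linarith

lemma neg_one_sub_le_mul_log_sub_log_one_sub_sub {r L : ℝ} (hr : r ∈ Ioo 0 1) (hL : 0 ≤ L) :
    -(1 + L) ≤ r * (log r - log (1 - r) - L) := by
  obtain ⟨hr0, hr1⟩ := hr
  have hlog : r * log (1 - r) ≤ 0 :=
    mul_nonpos_of_nonneg_of_nonpos hr0.le (log_nonpos (by linarith) (by linarith))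
  have hentropy := self_sub_one_le_mul_log hr0.le
  nlinarith

lemma sq_sub_two_mul_le_mul_div_sub_one_sq {g m : ℝ} (hm0 : 0 < m) (hm1 : m ≤ 1) :
    g ^ 2 - 2 * g ≤ m * (g / m - 1) ^ 2 := by
  have hexpand : m * (g / m - 1) ^ 2 = g ^ 2 / m - 2 * g + m := by
    field_simp
    ring
  have hdiv : g ^ 2 ≤ g ^ 2 / m := le_div_self (sq_nonneg g) hm0 hm1
  linarith

lemma HasDerivWithinAt.log_sub_log_one_sub_sub_id {ρ : ℝ → ℝ} {ρ' x : ℝ} {s : Set ℝ}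
    (hρ : HasDerivWithinAt ρ ρ' s x) (hx : ρ x ∈ Ioo 0 1) :
    HasDerivWithinAt (fun y => Real.log (ρ y) - Real.log (1 - ρ y) - y)
      (ρ' / (ρ x * (1 - ρ x)) - 1) s x := by
  obtain ⟨hx0, hx1⟩ := hx
  have hx1' : 1 - ρ x ≠ 0 := by linarith
  refine (((hρ.log hx0.ne').sub ((hρ.const_sub 1).log hx1')).sub
    (hasDerivWithinAt_id x s)).congr_deriv ?_
  field_simp
  ring

theorem integral_sq_derivWithin_sub_le_entropy_dissipation {ρ : ℝ → ℝ} {a b : ℝ}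
    (hab : a < b) (hρ : ContDiffOn ℝ 1 ρ (Icc a b)) (hmem : ∀ x ∈ Icc a b, ρ x ∈ Ioo 0 1) :
    (∫ x in a..b, (derivWithin ρ (Icc a b) x) ^ 2) - 2 * (ρ b - ρ a) ≤
      ∫ x in a..b, ρ x * (1 - ρ x) *
        (derivWithin (fun y => log (ρ y) - log (1 - ρ y) - y) (Icc a b) x) ^ 2 := by
  set g := derivWithin ρ (Icc a b)
  set m := fun x => ρ x * (1 - ρ x)
  have hm : ∀ x ∈ Icc a b, 0 < m x ∧ m x ≤ 1 := fun x hx => by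
    obtain ⟨h0, h1⟩ := hmem x hx
    exact ⟨mul_pos h0 (by linarith), by nlinarith⟩
  have hgc : ContinuousOn g (Icc a b) :=
    hρ.continuousOn_derivWithin (uniqueDiffOn_Icc hab) le_rfl
  have hmc : ContinuousOn m (Icc a b) :=
    hρ.continuousOn.mul (continuousOn_const.sub hρ.continuousOn)
  have hderiv : ∀ x ∈ Icc a b,
      derivWithin (fun y => log (ρ y) - log (1 - ρ y) - y) (Icc a b) x = g x / m x - 1 :=
    fun x hx => (HasDerivWithinAt.log_sub_log_one_sub_sub_id
      ((hρ.differentiableOn one_ne_zero) x hx).hasDerivWithinAt (hmem x hx)).derivWithin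
        (uniqueDiffOn_Icc hab x hx)
  have hlower :
      ∫ x in a..b, (g x ^ 2 - 2 * g x) = (∫ x in a..b, g x ^ 2) - 2 * (ρ b - ρ a) := by
    rw [intervalIntegral.integral_sub (f := fun x => g x ^ 2)
      ((hgc.pow 2).intervalIntegrable_of_Icc hab.le)
      ((hgc.intervalIntegrable_of_Icc hab.le).const_mul 2), intervalIntegral.integral_const_mul,
      intervalIntegral.integral_derivWithin_Icc_of_contDiffOn_Icc hρ hab.le]
  calc (∫ x in a..b, g x ^ 2) - 2 * (ρ b - ρ a)
      = ∫ x in a..b, (g x ^ 2 - 2 * g x) := hlower.symm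
    _ ≤ ∫ x in a..b, m x * (g x / m x - 1) ^ 2 :=
      intervalIntegral.integral_mono_on hab.le
        (((hgc.pow 2).sub (continuousOn_const.mul hgc)).intervalIntegrable_of_Icc hab.le)
        ((hmc.mul (((hgc.div hmc fun x hx => (hm x hx).1.ne').sub continuousOn_const).pow 2)
          ).intervalIntegrable_of_Icc hab.le)
        fun x hx => sq_sub_two_mul_le_mul_div_sub_one_sq (hm x hx).1 (hm x hx).2
    _ = _ := intervalIntegral.integral_congr fun x hx => by
      rw [uIcc_of_le hab.le] at hx
      simp only [hderiv x hx, m]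

/-- One-dimensional a-priori entropy dissipation lemma: for `L > 0`, `a, b ∈ [0,1]`, there is
a constant `C ≥ 0` (depending only on `a`, `b`, `L`) such that for every `C¹` function
`ρ : [0,L] → (0,1)`, with entropy variable `u(x) = log ρ(x) − log(1−ρ(x)) − x`,
`∫₀^L ρ(1−ρ)(u')² dx − a(1−ρ(0))u(0) + b ρ(L) u(L) ≥ ∫₀^L (ρ')² dx − C`. -/
theorem apriori_entropy_dissipation_1d (L : ℝ) (hL : 0 < L)
    (a b : ℝ) (ha : a ∈ Set.Icc (0:ℝ) 1) (hb : b ∈ Set.Icc (0:ℝ) 1) :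
    ∃ C : ℝ, 0 ≤ C ∧
      ∀ ρ : ℝ → ℝ, ContDiffOn ℝ 1 ρ (Set.Icc 0 L) →
        (∀ x ∈ Set.Icc (0:ℝ) L, ρ x ∈ Set.Ioo (0:ℝ) 1) →
        (∫ x in (0:ℝ)..L,
            ρ x * (1 - ρ x) *
              (derivWithin (fun y => Real.log (ρ y) - Real.log (1 - ρ y) - y)
                (Set.Icc 0 L) x) ^ 2)
          - a * (1 - ρ 0) * (Real.log (ρ 0) - Real.log (1 - ρ 0) - 0)
          + b * ρ L * (Real.log (ρ L) - Real.log (1 - ρ L) - L)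
        ≥ (∫ x in (0:ℝ)..L, (derivWithin ρ (Set.Icc 0 L) x) ^ 2) - C := by
  obtain ⟨ha0, -⟩ := ha
  obtain ⟨hb0, -⟩ := hb
  refine ⟨2 + a + b * (1 + L), by positivity, fun ρ hρ hmem => ?_⟩
  have hρ0 := hmem 0 ⟨le_rfl, hL.le⟩
  have hρL := hmem L ⟨hL.le, le_rfl⟩
  have hbulk := integral_sq_derivWithin_sub_le_entropy_dissipation hL hρ hmem
  have hbd0 := mul_le_mul_of_nonneg_left (one_sub_mul_log_sub_log_one_sub_le hρ0) ha0
  have hbdL := mul_le_mul_of_nonneg_left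
    (neg_one_sub_le_mul_log_sub_log_one_sub_sub hρL hL.le) hb0
  rw [sub_zero]
  linarith [hρ0.1, hρL.2]
end

section
/- Let L, σ, v be positive reals and suppose a = b = v/2. Let ρ : [0,L] → ℝ be twice continuously differentiable with 0 ≤ ρ(x) ≤ 1 for all x, satisfying d/dx( σ²·ρ'(x) − v(1−ρ(x))·ρ(x) ) = 0 on (0,L), together with the boundary conditions −σ²·ρ'(0) + v(1−ρ(0))·ρ(0) = (v/2)(1 − ρ(0)) and −σ²·ρ'(L) + v(1−ρ(L))·ρ(L) = (v/2)·ρ(L). Then ρ(x) = 1/2 for all x ∈ [0,L]. -/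
/-!
Write `g = ρ - 1/2`. The flux is constant, and comparing it with the two boundary conditions
gives `ρ(L) = 1 - ρ(0)` and the Riccati equation `σ²ρ' = v (c - g²)` with `c = g(0)/2`.
The quantity `E = c - g²` solves the linear equation `E' = -(2v/σ²) g E`, so it keeps the sign of
`E(0) = (ρ(0) - 1/2)(1 - ρ(0))`, and so does `ρ'`. If `E(0) > 0`, `ρ` increases, forcing
`ρ(0) < 1/2` and hence `E(0) < 0`; if `E(0) < 0`, `ρ` decreases, forcing `ρ(0) > 1/2`, which with
`ρ(0) ≤ 1` gives `E(0) ≥ 0`. Hence `E(0) = 0`, `ρ` is constant and `ρ(0) = 1 - ρ(0)`.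
-/

open Set Real

theorem constant_of_deriv_eq_zero_on_Ioo {f : ℝ → ℝ} {a b : ℝ}
    (hc : ContinuousOn f (Icc a b)) (hd : DifferentiableOn ℝ f (Ioo a b))
    (h0 : ∀ x ∈ Ioo a b, deriv f x = 0) :
    ∀ x ∈ Icc a b, f x = f a := by
  intro x hx
  have ha : a ∈ Icc a b := ⟨le_rfl, hx.1.trans hx.2⟩
  rw [← interior_Icc] at hd h0
  exact le_antisymm
    (antitoneOn_of_deriv_nonpos (convex_Icc a b) hc hd (fun y hy ↦ (h0 y hy).le) ha hx hx.1)
    (monotoneOn_of_deriv_nonneg (convex_Icc a b) hc hd (fun y hy ↦ (h0 y hy).ge) ha hx hx.1)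

theorem eq_mul_exp_integral_of_hasDerivAt {u p : ℝ → ℝ} {a b : ℝ} (hp : Continuous p)
    (hu : ∀ x ∈ Icc a b, HasDerivAt u (p x * u x) x) :
    ∀ x ∈ Icc a b, u x = u a * exp (∫ t in a..x, p t) := by
  set P : ℝ → ℝ := fun x ↦ ∫ t in a..x, p t
  have hP : ∀ x, HasDerivAt P (p x) x := fun x ↦
    hp.integral_hasStrictDerivAt a x |>.hasDerivAt
  have hw : ∀ x ∈ Icc a b, HasDerivAt (fun y ↦ u y * exp (-P y)) 0 x := by
    intro x hx
    refine ((hu x hx).mul (hP x).neg.exp).congr_deriv ?_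
    ring
  have hconst := constant_of_has_deriv_right_zero
    (fun x hx ↦ (hw x hx).continuousAt.continuousWithinAt)
    (fun x hx ↦ (hw x (Ico_subset_Icc_self hx)).hasDerivWithinAt)
  intro x hx
  have hPa : P a = 0 := intervalIntegral.integral_same
  calc u x = u x * exp (-P x) * exp (P x) := by
        rw [mul_assoc, ← exp_add, neg_add_cancel, exp_zero, mul_one]
    _ = u a * exp (P x) := by rw [hconst x hx, hPa, neg_zero, exp_zero, mul_one]

section Riccati

variable {f : ℝ → ℝ} {k c m a b : ℝ}

theorem deriv_eq_mul_exp_of_riccati (hf : Differentiable ℝ f)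
    (hf' : ∀ x ∈ Icc a b, deriv f x = k * (c - (f x - m) ^ 2)) :
    ∀ x ∈ Icc a b,
      deriv f x = k * (c - (f a - m) ^ 2) * exp (∫ t in a..x, -2 * k * (f t - m)) := by
  have hE := eq_mul_exp_integral_of_hasDerivAt (u := fun x ↦ c - (f x - m) ^ 2)
    (p := fun t ↦ -2 * k * (f t - m))
    (continuous_const.mul (hf.continuous.sub continuous_const)) fun x hx ↦
      (((hf x).hasDerivAt.sub_const m).pow 2).const_sub c |>.congr_deriv <| by
        rw [hf' x hx]
        ring
  intro x hx
  rw [hf' x hx, hE x hx, mul_assoc]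

theorem strictMonoOn_of_riccati (hk : 0 < k) (hf : Differentiable ℝ f)
    (hf' : ∀ x ∈ Icc a b, deriv f x = k * (c - (f x - m) ^ 2)) (h : (f a - m) ^ 2 < c) :
    StrictMonoOn f (Icc a b) := by
  refine strictMonoOn_of_deriv_pos (convex_Icc a b) hf.continuous.continuousOn fun x hx ↦ ?_
  rw [interior_Icc] at hx
  rw [deriv_eq_mul_exp_of_riccati hf hf' x (Ioo_subset_Icc_self hx)]
  have : 0 < c - (f a - m) ^ 2 := sub_pos.mpr h
  positivity

theorem strictAntiOn_of_riccati (hk : 0 < k) (hf : Differentiable ℝ f)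
    (hf' : ∀ x ∈ Icc a b, deriv f x = k * (c - (f x - m) ^ 2)) (h : c < (f a - m) ^ 2) :
    StrictAntiOn f (Icc a b) := by
  refine strictAntiOn_of_deriv_neg (convex_Icc a b) hf.continuous.continuousOn fun x hx ↦ ?_
  rw [interior_Icc] at hx
  rw [deriv_eq_mul_exp_of_riccati hf hf' x (Ioo_subset_Icc_self hx)]
  exact mul_neg_of_neg_of_pos (mul_neg_of_pos_of_neg hk (sub_neg.mpr h)) (exp_pos _)

theorem constant_of_riccati (hf : Differentiable ℝ f)
    (hf' : ∀ x ∈ Icc a b, deriv f x = k * (c - (f x - m) ^ 2)) (h : (f a - m) ^ 2 = c) :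
    ∀ x ∈ Icc a b, f x = f a :=
  constant_of_deriv_eq_zero_on_Ioo hf.continuous.continuousOn hf.differentiableOn fun x hx ↦ by
    rw [deriv_eq_mul_exp_of_riccati hf hf' x (Ioo_subset_Icc_self hx), h, sub_self,
      mul_zero, zero_mul]

end Riccati

theorem constant_half_is_unique_stationary_general (L σ v : ℝ)
    (hL : 0 < L) (hσ : 0 < σ) (hv : 0 < v)
    (ρ : ℝ → ℝ) (hreg : ContDiff ℝ 2 ρ)
    (hval : ∀ x ∈ Set.Icc (0:ℝ) L, ρ x ∈ Set.Icc (0:ℝ) 1)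
    (hode : ∀ x ∈ Set.Ioo (0:ℝ) L,
      deriv (fun y => σ ^ 2 * deriv ρ y - v * (1 - ρ y) * ρ y) x = 0)
    (hbc0 : -σ ^ 2 * deriv ρ 0 + v * (1 - ρ 0) * ρ 0 = (v / 2) * (1 - ρ 0))
    (hbcL : -σ ^ 2 * deriv ρ L + v * (1 - ρ L) * ρ L = (v / 2) * ρ L) :
    ∀ x ∈ Set.Icc (0:ℝ) L, ρ x = 1 / 2 := by
  have hρ : Differentiable ℝ ρ := hreg.differentiable (by norm_num)
  have hρ' : Differentiable ℝ (deriv ρ) := (hreg.deriv' (n := 1)).differentiable (by norm_num)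
  have h0 : (0:ℝ) ∈ Icc 0 L := ⟨le_rfl, hL.le⟩
  have hL' : L ∈ Icc 0 L := ⟨hL.le, le_rfl⟩
  have hJ : Differentiable ℝ fun y ↦ σ ^ 2 * deriv ρ y - v * (1 - ρ y) * ρ y := by fun_prop
  have hflux := constant_of_deriv_eq_zero_on_Ioo hJ.continuous.continuousOn hJ.differentiableOn hode
  have hsymm : ρ L = 1 - ρ 0 := mul_left_cancel₀ (by positivity : v / 2 ≠ 0) <| by
    linear_combination -hflux L hL' - hbcL + hbc0
  have hriccati : ∀ x ∈ Icc 0 L,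
      deriv ρ x = v / σ ^ 2 * ((ρ 0 - 1 / 2) / 2 - (ρ x - 1 / 2) ^ 2) := fun x hx ↦ by
    rw [div_mul_eq_mul_div, eq_div_iff (by positivity)]
    linear_combination hflux x hx - hbc0
  have hk : 0 < v / σ ^ 2 := by positivity
  have hcrit : (ρ 0 - 1 / 2) ^ 2 = (ρ 0 - 1 / 2) / 2 := by
    rcases lt_trichotomy ((ρ 0 - 1 / 2) ^ 2) ((ρ 0 - 1 / 2) / 2) with hlt | heq | hgt
    · have := strictMonoOn_of_riccati hk hρ hriccati hlt h0 hL' hL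
      nlinarith
    · exact heq
    · have := strictAntiOn_of_riccati hk hρ hriccati hgt h0 hL' hL
      nlinarith [(hval 0 h0).2]
  have hconst := constant_of_riccati hρ hriccati hcrit
  have hhalf : ρ 0 = 1 / 2 := by linarith [hconst L hL']
  exact fun x hx ↦ (hconst x hx).trans hhalf

/-- Uniqueness of the steady state in the symmetric maximal current case: if `a = b = v/2`
and `ρ : [0,L] → [0,1]` is a `C²` solution of `(σ²ρ' − v(1−ρ)ρ)' = 0` on `(0,L)` with
boundary conditions `−σ²ρ'(0) + v(1−ρ(0))ρ(0) = (v/2)(1−ρ(0))` and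
`−σ²ρ'(L) + v(1−ρ(L))ρ(L) = (v/2)ρ(L)`, then `ρ ≡ 1/2` on `[0,L]`. -/
theorem constant_half_is_unique_stationary (L σ v a b : ℝ)
    (hL : 0 < L) (hσ : 0 < σ) (hv : 0 < v) (ha : a = v / 2) (hb : b = v / 2)
    (ρ : ℝ → ℝ) (hreg : ContDiff ℝ 2 ρ)
    (hval : ∀ x ∈ Set.Icc (0:ℝ) L, ρ x ∈ Set.Icc (0:ℝ) 1)
    (hode : ∀ x ∈ Set.Ioo (0:ℝ) L,
      deriv (fun y => σ ^ 2 * deriv ρ y - v * (1 - ρ y) * ρ y) x = 0)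
    (hbc0 : -σ ^ 2 * deriv ρ 0 + v * (1 - ρ 0) * ρ 0 = (v / 2) * (1 - ρ 0))
    (hbcL : -σ ^ 2 * deriv ρ L + v * (1 - ρ L) * ρ L = (v / 2) * ρ L) :
    ∀ x ∈ Set.Icc (0:ℝ) L, ρ x = 1 / 2 :=
  constant_half_is_unique_stationary_general L σ v hL hσ hv ρ hreg hval hode hbc0 hbcL
end
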